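/- arXiv:1903.05351 — 4 statements merged into one kernel-verified Lean document; each statement's English description precedes it below -/
import Mathlib

section
/- Let n, m, t be positive integers with t ≤ n, and let f : 𝔽₂ⁿ → ℤ_{2^m} be a generalized Boolean function. Then f is a t-th order correlation-immune function if and only if for every vector c ∈ 𝔽₂ⁿ with 1 ≤ wt(c) ≤ t and every integer i with 1 ≤ i ≤ m, one has ∑_{x ∈ 𝔽₂ⁿ} ω_i^{f(x)} (−1)^{c·x} = 0, where ω_i = exp(2π√−1/2^i) is a primitive 2^i-th root of unity in ℂ, c·x = ∑_j c_j x_j (mod 2) is the inner product on 𝔽₂ⁿ, and wt(c) is the Hamming weight of c (the number of nonzero coordinates). -/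
noncomputable section

open Finset

/-- Inner product modulo 2 on `𝔽₂ⁿ`. -/
def dotp {n : ℕ} (c x : Fin n → ZMod 2) : ZMod 2 := ∑ j, c j * x j

/-- Hamming weight of a vector in `𝔽₂ⁿ`. -/
def wt {n : ℕ} (c : Fin n → ZMod 2) : ℕ := (Finset.univ.filter fun j => c j ≠ 0).card

/-- `f` is `t`-th order correlation-immune: fixing any `t` coordinates does not
change the output distribution (counting form). -/
def CI {n : ℕ} {A : Type*} (t : ℕ) (f : (Fin n → ZMod 2) → A) : Prop :=
  ∀ S : Finset (Fin n), S.card = t → ∀ a : Fin n → ZMod 2, ∀ α : A,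
    2 ^ t * Nat.card {x : Fin n → ZMod 2 // f x = α ∧ ∀ j ∈ S, x j = a j}
      = Nat.card {x : Fin n → ZMod 2 // f x = α}

/-- Binary expansion of `k` as a vector in `𝔽₂ⁿ`, `k = ∑ x_j 2^j`. -/
def bin (n k : ℕ) : Fin n → ZMod 2 := fun j => ((k / 2 ^ (j : ℕ)) % 2 : ℕ)

/-- `ω i = exp(2π√-1 / 2^i)`, a primitive `2^i`-th root of unity in `ℂ`. -/
def ω (i : ℕ) : ℂ := Complex.exp (2 * Real.pi * Complex.I / 2 ^ i)

/-!
Fixing the coordinates in `S` to `a` is detected by the characters supported on `S`: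
`2^|S| · [x = a on S] = ∑_{T ⊆ S} (-1)^{1_T · (x + a)}`. Hence `f` is `t`-th order
correlation-immune iff, for every value `α`, the Walsh transform `W_α(c)` of the fibre
indicator `[f = α]` vanishes at every `c` with `1 ≤ wt c ≤ t` (Xiao–Massey).

The sum in the theorem is `P_c(ω_i)` for the polynomial `P_c = ∑_α W_α(c) X^α` of degree
`< 2^m`, and `P_c(ω_0) = P_c(1) = ∑_x (-1)^{c·x} = 0` since `c ≠ 0`. So `P_c` vanishes at a
primitive `d`-th root of unity for every `d ∣ 2^m`; the cyclotomic polynomials `Φ_d` being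
pairwise coprime, `X^{2^m} - 1 = ∏_{d ∣ 2^m} Φ_d` divides `P_c`, which therefore is zero.
-/

section Sign

variable {R : Type*} [CommRing R]

theorem neg_one_pow_val_add (a b : ZMod 2) :
    (-1 : R) ^ (a + b).val = (-1) ^ a.val * (-1) ^ b.val := by
  rw [← pow_add, neg_one_pow_eq_pow_mod_two (a.val + b.val), ZMod.val_add]

theorem neg_one_pow_val_sum {ι : Type*} (s : Finset ι) (y : ι → ZMod 2) :
    (-1 : R) ^ (∑ j ∈ s, y j).val = ∏ j ∈ s, (-1) ^ (y j).val := by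
  classical
  induction s using Finset.induction_on with
  | empty => simp
  | insert j s hj ih => rw [sum_insert hj, prod_insert hj, neg_one_pow_val_add, ih]

theorem one_add_neg_one_pow_val (b : ZMod 2) :
    1 + (-1 : R) ^ b.val = if b = 0 then 2 else 0 := by
  obtain rfl | rfl : b = 0 ∨ b = 1 := by revert b; decide
  · simp [one_add_one_eq_two]
  · simp [ZMod.val_one]

theorem sum_neg_one_pow_val_mul (a : ZMod 2) :
    ∑ b : ZMod 2, (-1 : R) ^ (a * b).val = if a = 0 then 2 else 0 := by
  rw [← one_add_neg_one_pow_val, show (univ : Finset (ZMod 2)) = {0, 1} by decide,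
    sum_pair zero_ne_one, mul_zero, mul_one, ZMod.val_zero, pow_zero]

end Sign

section Walsh

variable {n : ℕ} {R : Type*} [CommRing R]

def charVec (T : Finset (Fin n)) : Fin n → ZMod 2 := fun j => if j ∈ T then 1 else 0

theorem dotp_charVec (T : Finset (Fin n)) (x : Fin n → ZMod 2) :
    dotp (charVec T) x = ∑ j ∈ T, x j := by
  simp [dotp, charVec, ite_mul, sum_ite_mem]

theorem wt_charVec (T : Finset (Fin n)) : wt (charVec T) = #T := by
  simp [wt, charVec]

theorem ne_zero_of_one_le_wt {c : Fin n → ZMod 2} (hc : 1 ≤ wt c) : c ≠ 0 :=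
  hammingNorm_pos_iff.1 hc

def walsh (g : (Fin n → ZMod 2) → R) (c : Fin n → ZMod 2) : R :=
  ∑ x, g x * (-1) ^ (dotp c x).val

theorem walsh_zero (g : (Fin n → ZMod 2) → R) : walsh g 0 = ∑ x, g x := by
  simp [walsh, dotp]

theorem walsh_one (c : Fin n → ZMod 2) :
    walsh (fun _ => (1 : R)) c = if c = 0 then 2 ^ n else 0 := by
  simp only [walsh, one_mul, dotp, neg_one_pow_val_sum]
  rw [← Fintype.prod_sum (fun j b => (-1 : R) ^ (c j * b).val)]
  simp only [sum_neg_one_pow_val_mul, Fintype.prod_ite_zero, prod_const, card_univ,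
    Fintype.card_fin, ← funext_iff]
  rfl

theorem walsh_const {c : Fin n → ZMod 2} (hc : c ≠ 0) (r : R) : walsh (fun _ => r) c = 0 :=
  calc walsh (fun _ => r) c = r * walsh (fun _ => (1 : R)) c := by
        simp only [walsh, mul_sum, one_mul]
    _ = 0 := by rw [walsh_one, if_neg hc, mul_zero]

def cubeSum (g : (Fin n → ZMod 2) → R) (S : Finset (Fin n)) (a : Fin n → ZMod 2) : R :=
  ∑ x with ∀ j ∈ S, x j = a j, g x

theorem two_pow_card_mul_ite_eqOn (S : Finset (Fin n)) (x a : Fin n → ZMod 2) :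
    (2 : R) ^ #S * (if ∀ j ∈ S, x j = a j then 1 else 0)
      = ∑ T ∈ S.powerset, (-1) ^ (∑ j ∈ T, a j).val * (-1) ^ (dotp (charVec T) x).val :=
  calc (2 : R) ^ #S * (if ∀ j ∈ S, x j = a j then 1 else 0)
      = ∏ j ∈ S, (1 + (-1) ^ (x j + a j).val) := by
        simp only [one_add_neg_one_pow_val, CharTwo.add_eq_zero, prod_ite_zero, prod_const,
          mul_ite, mul_one, mul_zero]
    _ = ∑ T ∈ S.powerset, ∏ j ∈ T, (-1) ^ (x j + a j).val := prod_one_add S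
    _ = _ := by
        refine sum_congr rfl fun T _ => ?_
        simp only [dotp_charVec, neg_one_pow_val_sum, neg_one_pow_val_add, prod_mul_distrib,
          mul_comm]

theorem two_pow_card_mul_cubeSum (g : (Fin n → ZMod 2) → R) (S : Finset (Fin n))
    (a : Fin n → ZMod 2) :
    2 ^ #S * cubeSum g S a
      = ∑ T ∈ S.powerset, (-1) ^ (∑ j ∈ T, a j).val * walsh g (charVec T) := by
  simp only [cubeSum, sum_filter, walsh, mul_sum]
  rw [sum_comm]
  refine sum_congr rfl fun x _ => ?_
  simp_rw [mul_left_comm _ (g x), ← mul_sum, ← two_pow_card_mul_ite_eqOn]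
  split_ifs <;> ring

theorem cubeSum_eq_sum_add (g : (Fin n → ZMod 2) → R) (S : Finset (Fin n))
    (a : Fin n → ZMod 2) :
    cubeSum g S a = ∑ b with ∀ j ∈ S, b j = 0, g (a + b) := by
  simp only [cubeSum, sum_filter]
  refine Fintype.sum_equiv (Equiv.subRight a) _ _ fun x => ?_
  simp [sub_eq_zero]

theorem walsh_cubeSum (g : (Fin n → ZMod 2) → R) {S : Finset (Fin n)} {c : Fin n → ZMod 2}
    (hc : ∀ j ∉ S, c j = 0) :
    walsh (cubeSum g S) c = #{b : Fin n → ZMod 2 | ∀ j ∈ S, b j = 0} * walsh g c := by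
  have hdotp : ∀ a b : Fin n → ZMod 2, (∀ j ∈ S, b j = 0) → dotp c (a + b) = dotp c a := by
    intro a b hb
    simp only [dotp, Pi.add_apply, mul_add, sum_add_distrib, add_eq_left]
    refine sum_eq_zero fun j _ => ?_
    by_cases hj : j ∈ S
    · rw [hb j hj, mul_zero]
    · rw [hc j hj, zero_mul]
  simp only [walsh, cubeSum_eq_sum_add, sum_mul]
  rw [sum_comm, ← nsmul_eq_mul, ← sum_const]
  refine sum_congr rfl fun b hb => ?_
  rw [mem_filter] at hb
  exact Fintype.sum_equiv (Equiv.addRight b) _ _ fun a => by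
    rw [Equiv.coe_addRight, hdotp a b hb.2]

theorem forall_cubeSum_iff_walsh_eq_zero [IsDomain R] [CharZero R] {t : ℕ} (htn : t ≤ n)
    (g : (Fin n → ZMod 2) → R) :
    (∀ S : Finset (Fin n), #S = t → ∀ a, 2 ^ t * cubeSum g S a = ∑ x, g x) ↔
      ∀ c, 1 ≤ wt c → wt c ≤ t → walsh g c = 0 := by
  constructor
  · intro h c hc hct
    obtain ⟨S, hsupp, hS⟩ := exists_superset_card_eq hct (by simpa using htn)
    have hcS : ∀ j ∉ S, c j = 0 := fun j hj => by_contra fun hcj => hj (hsupp (by simpa using hcj))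
    -- all subcube sums along `S` are equal, so `cubeSum g S` is constant
    have key : 2 ^ t * walsh (cubeSum g S) c = walsh (fun _ => ∑ x, g x) c := by
      simp only [walsh, mul_sum, ← mul_assoc, h S hS]
    rw [walsh_cubeSum g hcS, walsh_const (ne_zero_of_one_le_wt hc)] at key
    have hK : (#{b : Fin n → ZMod 2 | ∀ j ∈ S, b j = 0} : R) ≠ 0 :=
      Nat.cast_ne_zero.2 (card_ne_zero_of_mem (mem_filter.2 ⟨mem_univ 0, fun _ _ => rfl⟩))
    exact (mul_eq_zero.1 ((mul_eq_zero.1 key).resolve_left (by simp))).resolve_left hK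
  · intro h S hS a
    rw [← hS, two_pow_card_mul_cubeSum, sum_eq_single_of_mem ∅ (empty_mem_powerset S)]
    · have hempty : charVec (∅ : Finset (Fin n)) = 0 := by ext; simp [charVec]
      simp [hempty, walsh_zero]
    · intro T hT hne
      rw [h _ (by simpa [wt_charVec, Nat.one_le_iff_ne_zero] using hne)
        (by simpa [wt_charVec, ← hS] using card_le_card (mem_powerset.1 hT)), mul_zero]

end Walsh

section Fibers

variable {n : ℕ}

theorem natCard_subtype_eq_sum {X : Type*} [Fintype X] (p : X → Prop) [DecidablePred p] :
    (Nat.card {x // p x} : ℤ) = ∑ x, if p x then 1 else 0 := by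
  simp [Nat.card_eq_fintype_card, Fintype.card_subtype, sum_boole]

theorem CI_iff_forall_walsh_eq_zero {A : Type*} [DecidableEq A] {t : ℕ} (htn : t ≤ n)
    (f : (Fin n → ZMod 2) → A) :
    CI t f ↔ ∀ c, 1 ≤ wt c → wt c ≤ t →
      ∀ α, walsh (fun x => if f x = α then (1 : ℤ) else 0) c = 0 := by
  have hcube : ∀ S a α, cubeSum (fun x => if f x = α then (1 : ℤ) else 0) S a
      = Nat.card {x // f x = α ∧ ∀ j ∈ S, x j = a j} := by
    intro S a α
    rw [natCard_subtype_eq_sum, cubeSum, sum_filter]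
    exact sum_congr rfl fun x _ => by simp only [ite_and]; split_ifs <;> rfl
  have hcast : ∀ S a α, (2 ^ t * cubeSum (fun x => if f x = α then (1 : ℤ) else 0) S a
      = ∑ x, if f x = α then 1 else 0) ↔
        2 ^ t * Nat.card {x // f x = α ∧ ∀ j ∈ S, x j = a j} = Nat.card {x // f x = α} := by
    intro S a α
    rw [hcube, ← natCard_subtype_eq_sum]
    norm_cast
  calc CI t f
      ↔ ∀ α, ∀ S : Finset (Fin n), #S = t → ∀ a,
          2 ^ t * cubeSum (fun x => if f x = α then (1 : ℤ) else 0) S a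
            = ∑ x, if f x = α then 1 else 0 := by
        simp only [CI, hcast]
        exact ⟨fun h α S hS a => h S hS a α, fun h S hS a α => h α S hS a⟩
    _ ↔ ∀ α, ∀ c, 1 ≤ wt c → wt c ≤ t →
          walsh (fun x => if f x = α then (1 : ℤ) else 0) c = 0 :=
        forall_congr' fun α => forall_cubeSum_iff_walsh_eq_zero htn _
    _ ↔ _ := ⟨fun h c hc hct α => h α c hc hct, fun h α c hc hct => h c hc hct α⟩

theorem walsh_comp_eq_sum {R A : Type*} [CommRing R] [Fintype A] [DecidableEq A]
    (f : (Fin n → ZMod 2) → A) (φ : A → R) (c : Fin n → ZMod 2) :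
    walsh (fun x => φ (f x)) c
      = ∑ α, φ α * (walsh (fun x => if f x = α then 1 else 0) c : ℤ) := by
  simp only [walsh, Int.cast_sum, Int.cast_mul, Int.cast_pow, Int.cast_neg, Int.cast_one,
    Int.cast_ite, Int.cast_zero, mul_sum]
  rw [sum_comm]
  refine sum_congr rfl fun x _ => ?_
  simp [ite_mul, mul_ite]

end Fibers

section RootsOfUnity

open Polynomial

theorem Polynomial.eq_zero_of_degree_lt_of_aeval_primitiveRoot_eq_zero {K : Type*} [Field K]
    [CharZero K] {N : ℕ} (hN : 0 < N) {p : ℚ[X]} (hdeg : p.degree < N)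
    (h : ∀ d ∈ N.divisors, ∃ μ : K, IsPrimitiveRoot μ d ∧ aeval μ p = 0) : p = 0 := by
  have hdvd : X ^ N - 1 ∣ p := by
    rw [← prod_cyclotomic_eq_X_pow_sub_one hN]
    refine Finset.prod_dvd_of_coprime (fun d _ e _ hde => cyclotomic.isCoprime_rat hde)
      fun d hd => ?_
    obtain ⟨μ, hμ, hp⟩ := h d hd
    rw [cyclotomic_eq_minpoly_rat hμ (Nat.pos_of_mem_divisors hd)]
    exact minpoly.dvd ℚ μ hp
  exact eq_zero_of_dvd_of_degree_lt hdvd (by rwa [← C_1, degree_X_pow_sub_C hN])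

theorem eq_zero_of_sum_mul_primitiveRoot_pow_eq_zero {K : Type*} [Field K] [CharZero K]
    {N : ℕ} [NeZero N] (a : ZMod N → ℚ)
    (h : ∀ d ∈ N.divisors, ∃ μ : K, IsPrimitiveRoot μ d ∧ ∑ k, (a k : K) * μ ^ k.val = 0) :
    a = 0 := by
  set p : ℚ[X] := ∑ k, C (a k) * X ^ k.val
  have hdeg : p.degree < N :=
    (degree_sum_le _ _).trans_lt <| (Finset.sup_lt_iff (WithBot.bot_lt_coe N)).2 fun k _ =>
      (degree_C_mul_X_pow_le _ _).trans_lt (WithBot.coe_lt_coe.2 k.val_lt)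
  have hp : p = 0 := eq_zero_of_degree_lt_of_aeval_primitiveRoot_eq_zero (NeZero.pos N) hdeg
    fun d hd => (h d hd).imp fun μ ⟨hμ, hsum⟩ => ⟨hμ, by simpa [p] using hsum⟩
  funext k
  simpa [p, finsetSum_coeff, coeff_C_mul_X_pow, ZMod.val_injective N |>.eq_iff] using
    congr_arg (coeff · k.val) hp

theorem isPrimitiveRoot_ω (i : ℕ) : IsPrimitiveRoot (ω i) (2 ^ i) := by
  simpa [ω] using Complex.isPrimitiveRoot_exp (2 ^ i) (by positivity)

end RootsOfUnity

theorem forall_walsh_fiber_eq_zero_iff {n m : ℕ} (f : (Fin n → ZMod 2) → ZMod (2 ^ m))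
    {c : Fin n → ZMod 2} (hc : c ≠ 0) :
    (∀ α, walsh (fun x => if f x = α then (1 : ℤ) else 0) c = 0) ↔
      ∀ i, 1 ≤ i → i ≤ m → walsh (fun x => ω i ^ (f x).val) c = 0 := by
  have hdecomp : ∀ i, walsh (fun x => ω i ^ (f x).val) c
      = ∑ α, (((walsh (fun x => if f x = α then 1 else 0) c : ℤ) : ℚ) : ℂ) * ω i ^ α.val := by
    intro i
    exact (walsh_comp_eq_sum f (fun α => ω i ^ α.val) c).trans (by simp [mul_comm])
  constructor
  · intro h i _ _
    simp only [hdecomp, h, Int.cast_zero, Rat.cast_zero, zero_mul, sum_const_zero]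
  · intro h α
    have hzero := eq_zero_of_sum_mul_primitiveRoot_pow_eq_zero (K := ℂ)
      (fun α => ((walsh (fun x => if f x = α then 1 else 0) c : ℤ) : ℚ)) fun d hd => by
        obtain ⟨i, hi, rfl⟩ := (Nat.mem_divisors_prime_pow Nat.prime_two m).1 hd
        refine ⟨ω i, isPrimitiveRoot_ω i, ?_⟩
        rw [← hdecomp]
        rcases i.eq_zero_or_pos with rfl | hi0
        · have hω : ω 0 = 1 := IsPrimitiveRoot.one_right_iff.1 (by simpa using isPrimitiveRoot_ω 0)
          simpa [hω] using walsh_const hc (1 : ℂ)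
        · exact h i hi0 hi
    exact Int.cast_eq_zero.1 (congr_fun hzero α)

theorem stmt0_general (n m t : ℕ) (htn : t ≤ n)
    (f : (Fin n → ZMod 2) → ZMod (2 ^ m)) :
    CI t f ↔ ∀ c : Fin n → ZMod 2, 1 ≤ wt c → wt c ≤ t → ∀ i : ℕ, 1 ≤ i → i ≤ m →
      ∑ x : Fin n → ZMod 2, ω i ^ (f x).val * (-1 : ℂ) ^ (dotp c x).val = 0 := by
  rw [CI_iff_forall_walsh_eq_zero htn]
  exact forall_congr' fun c => imp_congr_right fun hc => imp_congr_right fun _ =>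
    forall_walsh_fiber_eq_zero_iff f (ne_zero_of_one_le_wt hc)

/-- A generalized Boolean function `f : 𝔽₂ⁿ → ℤ_{2^m}` is `t`-th order correlation-immune
iff its Walsh transform `∑_x ω_i^{f(x)} (-1)^{c·x}` vanishes for all `c` with
`1 ≤ wt(c) ≤ t` and all `1 ≤ i ≤ m`. -/
theorem stmt0 (n m t : ℕ) (hn : 0 < n) (hm : 0 < m) (ht : 0 < t) (htn : t ≤ n)
    (f : (Fin n → ZMod 2) → ZMod (2 ^ m)) :
    CI t f ↔ ∀ c : Fin n → ZMod 2, 1 ≤ wt c → wt c ≤ t → ∀ i : ℕ, 1 ≤ i → i ≤ m →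
      ∑ x : Fin n → ZMod 2, ω i ^ (f x).val * (-1 : ℂ) ^ (dotp c x).val = 0 :=
  stmt0_general n m t htn f
end
end

section
/- Let k be a positive integer, let A be a finite set, and let g : 𝔽₂ᵏ → A. Under the uniform distribution on 𝔽₂ᵏ, the value g(X₁,…,X_k) is independent of the coordinate variables (X₁,…,X_k) (equivalently, for every α ∈ A and every (a₁,…,a_k) ∈ 𝔽₂ᵏ: 2ᵏ · #{x ∈ 𝔽₂ᵏ : g(x) = α, x = (a₁,…,a_k)} = #{x : g(x) = α}) if and only if g(X) is independent of the linear combination c·X = c₁X₁ + ⋯ + c_kX_k (mod 2) for every nonzero c ∈ 𝔽₂ᵏ (equivalently, for every α ∈ A, every nonzero c ∈ 𝔽₂ᵏ and every b ∈ 𝔽₂: 2 · #{x ∈ 𝔽₂ᵏ : g(x) = α, c·x = b} = #{x : g(x) = α}). -/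
noncomputable section

open Finset

/-! Write `χ b = (-1)ᵇ`. For `F ⊆ 𝔽₂ⁿ` the bias `∑_{x ∈ F} χ (c ⬝ x)` vanishes exactly when `c ⬝ x`
is balanced on `F`, and the biases recover `F` by Fourier inversion:
`∑_c bias_F(c) χ (c ⬝ a) = 2ⁿ 1_F(a)`. So all nonzero biases of `F` vanish iff
`2ⁿ 1_F(a) = bias_F(0) = #F` for every `a`; apply this to each fibre `F = g⁻¹(α)`. -/

def χ (b : ZMod 2) : ℤ := (-1) ^ b.val

lemma χ_zero : χ 0 = 1 := rfl

lemma χ_add : ∀ a b : ZMod 2, χ (a + b) = χ a * χ b := by decide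

lemma χ_of_ne_zero : ∀ b : ZMod 2, b ≠ 0 → χ b = -1 := by decide

lemma sum_χ_eq_zero_iff {α : Type*} (F : Finset α) (f : α → ZMod 2) :
    ∑ x ∈ F, χ (f x) = 0 ↔ ∀ b, 2 * #{x ∈ F | f x = b} = #F := by
  classical
  have hχ : ∀ b, χ b = 1 - 2 * if b = 1 then 1 else 0 := by decide
  have hsum : ∑ x ∈ F, χ (f x) = #F - 2 * #{x ∈ F | f x = 1} := by
    simp only [hχ, sum_sub_distrib, ← mul_sum, sum_boole, sum_const, nsmul_one]
  have hsplit : #{x ∈ F | f x = 0} + #{x ∈ F | f x = 1} = #F := by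
    have h01 : ∀ b : ZMod 2, ¬b = 0 ↔ b = 1 := by decide
    have := card_filter_add_card_filter_not (s := F) (fun x => f x = 0)
    rwa [filter_congr fun x _ => h01 (f x)] at this
  rw [hsum, sub_eq_zero]
  constructor
  · intro h b
    have h' : #F = 2 * #{x ∈ F | f x = 1} := by exact_mod_cast h
    obtain rfl | rfl : b = 0 ∨ b = 1 := by revert b; decide
    all_goals omega
  · intro h
    exact_mod_cast (h 1).symm

lemma dotp_eq_dotProduct {n : ℕ} (c x : Fin n → ZMod 2) : dotp c x = c ⬝ᵥ x := rfl

lemma sum_χ_dotp {n : ℕ} (y : Fin n → ZMod 2) :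
    ∑ c, χ (dotp c y) = if y = 0 then 2 ^ n else 0 := by
  split_ifs with hy
  · simp [hy, dotp_eq_dotProduct, χ]
  obtain ⟨j, hj⟩ := Function.ne_iff.mp hy
  have hflip : χ (dotp (Pi.single j 1) y) = -1 := by
    rw [dotp_eq_dotProduct, single_one_dotProduct]
    exact χ_of_ne_zero _ hj
  -- translating `c` by `Pi.single j 1` flips the sign of every term
  refine eq_zero_of_mul_eq_self_left (b := -1) (by decide) ?_
  rw [mul_sum, ← hflip]
  exact Fintype.sum_equiv (Equiv.addRight (Pi.single j 1)) _ _ fun c => by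
    simp [dotp_eq_dotProduct, add_dotProduct, χ_add, mul_comm]

lemma sum_sum_χ_dotp_mul_χ_dotp {n : ℕ} (F : Finset (Fin n → ZMod 2)) (a : Fin n → ZMod 2) :
    ∑ c, (∑ x ∈ F, χ (dotp c x)) * χ (dotp c a) = 2 ^ n * if a ∈ F then 1 else 0 := by
  simp_rw [sum_mul, ← χ_add, dotp_eq_dotProduct, ← dotProduct_add]
  rw [sum_comm]
  simp_rw [← dotp_eq_dotProduct, sum_χ_dotp, ← ZModModule.sub_eq_add, sub_eq_zero]
  rw [sum_ite_eq', mul_ite, mul_one, mul_zero]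

lemma two_pow_mul_indicator_eq_card_iff {n : ℕ} (F : Finset (Fin n → ZMod 2)) :
    (∀ a, 2 ^ n * (if a ∈ F then 1 else 0) = #F) ↔
      ∀ c ≠ 0, ∑ x ∈ F, χ (dotp c x) = 0 := by
  constructor
  · intro h c hc
    have h' (x) : (2 ^ n * (if x ∈ F then 1 else 0) : ℤ) = #F := by exact_mod_cast h x
    have : (2 : ℤ) ^ n * ∑ x ∈ F, χ (dotp c x) = 0 := calc
      _ = ∑ x, 2 ^ n * (if x ∈ F then 1 else 0) * χ (dotp c x) := by
        simp [mul_sum, sum_ite_mem]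
      _ = #F * ∑ x, χ (dotp x c) := by
        simp_rw [h', mul_sum, dotp_eq_dotProduct, dotProduct_comm]
      _ = 0 := by rw [sum_χ_dotp, if_neg hc, mul_zero]
    exact (mul_eq_zero.mp this).resolve_left (by positivity)
  · intro h a
    have := sum_sum_χ_dotp_mul_χ_dotp F a
    rw [Fintype.sum_eq_single 0 fun c hc => by rw [h c hc, zero_mul]] at this
    simp only [dotp_eq_dotProduct, zero_dotProduct, χ_zero, mul_one, sum_const, nsmul_one] at this
    exact_mod_cast this.symm

theorem stmt6_general (k : ℕ) (A : Type*)
    (g : (Fin k → ZMod 2) → A) :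
    (∀ α : A, ∀ a : Fin k → ZMod 2,
        2 ^ k * Nat.card {x : Fin k → ZMod 2 // g x = α ∧ x = a}
          = Nat.card {x : Fin k → ZMod 2 // g x = α}) ↔
    (∀ α : A, ∀ c : Fin k → ZMod 2, c ≠ 0 → ∀ b : ZMod 2,
        2 * Nat.card {x : Fin k → ZMod 2 // g x = α ∧ dotp c x = b}
          = Nat.card {x : Fin k → ZMod 2 // g x = α}) := by
  classical
  simp only [Nat.card_eq_fintype_card, Fintype.card_subtype, ← filter_filter, filter_eq',
    apply_ite card, card_singleton, card_empty]
  refine forall_congr' fun α => ?_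
  simp only [two_pow_mul_indicator_eq_card_iff, sum_χ_eq_zero_iff]

/-- Xiao–Massey linear combination lemma (counting form): `g(X)` is independent of
`(X₁,…,X_k)` iff `g(X)` is independent of every nonzero linear combination `c·X`. -/
theorem stmt6 (k : ℕ) (hk : 0 < k) (A : Type*) [Finite A]
    (g : (Fin k → ZMod 2) → A) :
    (∀ α : A, ∀ a : Fin k → ZMod 2,
        2 ^ k * Nat.card {x : Fin k → ZMod 2 // g x = α ∧ x = a}
          = Nat.card {x : Fin k → ZMod 2 // g x = α}) ↔
    (∀ α : A, ∀ c : Fin k → ZMod 2, c ≠ 0 → ∀ b : ZMod 2,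
        2 * Nat.card {x : Fin k → ZMod 2 // g x = α ∧ dotp c x = b}
          = Nat.card {x : Fin k → ZMod 2 // g x = α}) :=
  stmt6_general k A g
end
end

section
/- Let m be a positive integer and let d₀, d₁, …, d_{2^m−1} be integers such that ∑_{α=0}^{2^m−1} d_α ω_i^α = 0 in ℂ for every integer i with 1 ≤ i ≤ m, where ω_i = exp(2π√−1/2^i). Then all the coefficients are equal: d₀ = d₁ = ⋯ = d_{2^m−1}. In particular, if additionally ∑_{α=0}^{2^m−1} d_α = 0, then d_α = 0 for every α. -/
noncomputable section

open Finset Polynomial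

/-- Key algebraic lemma: if `∑_α d_α ω_i^α = 0` for all `1 ≤ i ≤ m`, then all the
integer coefficients `d₀,…,d_{2^m-1}` are equal; if moreover they sum to `0`,
they all vanish. -/
theorem stmt8 (m : ℕ) (hm : 0 < m) (d : ℕ → ℤ)
    (h : ∀ i : ℕ, 1 ≤ i → i ≤ m →
      ∑ α ∈ Finset.range (2 ^ m), (d α : ℂ) * ω i ^ α = 0) :
    (∀ α ∈ Finset.range (2 ^ m), ∀ β ∈ Finset.range (2 ^ m), d α = d β) ∧
    ((∑ α ∈ Finset.range (2 ^ m), d α = 0) → ∀ α ∈ Finset.range (2 ^ m), d α = 0) := by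
  classical
  set N := 2 ^ m with hN
  have hNpos : 0 < N := by positivity
  set P : ℚ[X] := ∑ α ∈ range N, C (d α : ℚ) * X ^ α with hP
  have hcoeff : ∀ β < N, P.coeff β = (d β : ℚ) := by
    intro β hβ
    rw [hP, finset_sum_coeff]
    simp only [coeff_C_mul, coeff_X_pow]
    rw [Finset.sum_eq_single β]
    · simp
    · intro b _ hb; simp [if_neg (Ne.symm hb)]
    · intro hβ'; exact absurd (mem_range.2 hβ) hβ'
  have hdvd : ∀ i ∈ range m, cyclotomic (2 ^ (i + 1)) ℚ ∣ P := by
    intro i hi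
    have hprim : IsPrimitiveRoot (ω (i + 1)) (2 ^ (i + 1)) := by
      have := Complex.isPrimitiveRoot_exp (2 ^ (i + 1)) (by positivity)
      rw [ω]
      convert this using 3
      push_cast; ring
    rw [cyclotomic_eq_minpoly_rat hprim (by positivity)]
    apply minpoly.dvd
    have heval : (aeval (ω (i + 1))) P = ∑ α ∈ range N, (d α : ℂ) * ω (i + 1) ^ α := by
      rw [hP, map_sum]
      congr 1; ext α
      simp [aeval_C]
    rw [heval]
    exact h (i + 1) le_add_self (by have := mem_range.1 hi; omega)
  have hprod : (∏ i ∈ range m, cyclotomic (2 ^ (i + 1)) ℚ) ∣ P := by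
    apply Finset.prod_dvd_of_coprime _ hdvd
    intro i _ j _ hij
    exact cyclotomic.isCoprime_rat (by
      intro hc
      exact hij (by
        have := Nat.pow_right_injective (le_refl 2) hc
        omega))
  set G : ℚ[X] := ∑ α ∈ range N, X ^ α with hG
  have hprodG : (∏ i ∈ range m, cyclotomic (2 ^ (i + 1)) ℚ) = G := by
    have hX1 : (X - 1 : ℚ[X]) ≠ 0 := by
      simpa using X_sub_C_ne_zero (1 : ℚ)
    apply mul_left_cancel₀ hX1
    have h1 : (X - 1 : ℚ[X]) * G = X ^ N - 1 := mul_geom_sum X N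
    have h2 : (∏ x ∈ (2 ^ m).divisors, cyclotomic x ℚ)
        = ∏ i ∈ range (m + 1), cyclotomic (2 ^ i) ℚ :=
      Nat.prod_divisors_prime_pow Nat.prime_two
    have h3 : (∏ x ∈ (2 ^ m).divisors, cyclotomic x ℚ) = X ^ N - 1 :=
      prod_cyclotomic_eq_X_pow_sub_one (by positivity) ℚ
    rw [h1, ← h3, h2, Finset.prod_range_succ']
    simp [cyclotomic_one, mul_comm]
  rw [hprodG] at hprod
  obtain ⟨q, hq⟩ := hprod
  -- G is monic of degree N - 1
  have hGmonic : G.Monic := monic_geom_sum_X hNpos.ne'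
  have hGcoeff : G.coeff (N - 1) = 1 := by
    rw [hG, finset_sum_coeff]
    simp only [coeff_X_pow]
    rw [Finset.sum_eq_single (N - 1)]
    · simp
    · intro b _ hb; simp [if_neg (Ne.symm hb)]
    · intro hβ'; exact absurd (mem_range.2 (by omega)) hβ'
  have hGdeg : G.natDegree = N - 1 := by
    refine le_antisymm ?_ (le_natDegree_of_ne_zero (by rw [hGcoeff]; norm_num))
    apply natDegree_sum_le_of_forall_le
    intro i hi
    have := mem_range.1 hi
    simp only [natDegree_X_pow]
    omega
  have hPdeg : P.natDegree ≤ N - 1 := by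
    apply natDegree_sum_le_of_forall_le
    intro i hi
    have := mem_range.1 hi
    exact (natDegree_C_mul_le _ _).trans (by simp only [natDegree_X_pow]; omega)
  -- q is constant
  have hqC : q = C (q.coeff 0) := by
    by_cases hq0 : q = 0
    · rw [hq0]; simp
    · apply eq_C_of_natDegree_eq_zero
      have hP0 : P ≠ 0 := by
        rw [hq]
        exact mul_ne_zero hGmonic.ne_zero hq0
      have := natDegree_mul hGmonic.ne_zero hq0
      rw [← hq, hGdeg] at this
      omega
  set c := q.coeff 0 with hc
  have key : ∀ α < N, (d α : ℚ) = c := by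
    intro α hα
    rw [← hcoeff α hα, hq, hqC, coeff_mul_C]
    have : G.coeff α = 1 := by
      rw [hG, finset_sum_coeff]
      simp only [coeff_X_pow]
      rw [Finset.sum_eq_single α]
      · simp
      · intro b _ hb; simp [if_neg (Ne.symm hb)]
      · intro hβ'; exact absurd (mem_range.2 hα) hβ'
    rw [this, one_mul]
  have heq : ∀ α ∈ range N, ∀ β ∈ range N, d α = d β := by
    intro α hα β hβ
    have : (d α : ℚ) = (d β : ℚ) := by
      rw [key α (mem_range.1 hα), key β (mem_range.1 hβ)]
    exact_mod_cast this
  refine ⟨heq, ?_⟩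
  intro hsum α hα
  have h0 : ∑ β ∈ range N, d β = N * d α := by
    rw [Finset.sum_congr rfl fun β hβ => heq β hβ α hα]
    simp [mul_comm]
  rw [hsum] at h0
  have : (N : ℤ) ≠ 0 := by positivity
  exact (mul_eq_zero.1 h0.symm).resolve_left this
end
end

section
/- Let n, m, t be positive integers with t ≤ n, and let f : 𝔽₂ⁿ → ℤ_{2^m} be a generalized Boolean function. Then f is a t-th order correlation-immune function if and only if for every nonzero c ∈ 𝔽₂ⁿ with wt(c) ≤ t, every b ∈ 𝔽₂, and every α ∈ ℤ_{2^m}: 2 · #{x ∈ 𝔽₂ⁿ : f(x) = α and c·x = b} = #{x ∈ 𝔽₂ⁿ : f(x) = α}, i.e., f(x) is statistically independent of c·x under the uniform distribution on 𝔽₂ⁿ for every nonzero c of Hamming weight at most t. -/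
noncomputable section

open Finset

/-- sign character -/
def sgn (u : ZMod 2) : ℤ := if u = 0 then 1 else -1

lemma sgn_add (u v : ZMod 2) : sgn (u + v) = sgn u * sgn v := by
  revert u v; decide

lemma dotp_add_right {n : ℕ} (c x y : Fin n → ZMod 2) :
    dotp c (x + y) = dotp c x + dotp c y := by
  simp [dotp, mul_add, Finset.sum_add_distrib]

lemma dotp_comm {n : ℕ} (c x : Fin n → ZMod 2) : dotp c x = dotp x c := by
  simp [dotp, mul_comm]

lemma dotp_zero_right {n : ℕ} (c : Fin n → ZMod 2) : dotp c 0 = 0 := by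
  simp [dotp]

lemma dotp_zero_left {n : ℕ} (x : Fin n → ZMod 2) : dotp 0 x = 0 := by
  simp [dotp]

/-- vectors supported inside `S` -/
def CSet {n : ℕ} (S : Finset (Fin n)) : Finset (Fin n → ZMod 2) :=
  univ.filter fun c => ∀ j ∉ S, c j = 0

lemma mem_CSet {n : ℕ} {S : Finset (Fin n)} {c : Fin n → ZMod 2} :
    c ∈ CSet S ↔ ∀ j ∉ S, c j = 0 := by simp [CSet]

lemma dotp_update {n : ℕ} (c y : Fin n → ZMod 2) (j : Fin n) (ε : ZMod 2)
    (hc : c j = 0) : dotp (Function.update c j ε) y = dotp c y + ε * y j := by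
  have h1 : (fun k => Function.update c j ε k * y k)
      = Function.update (fun k => c k * y k) j (ε * y j) := by
    funext k
    by_cases hk : k = j
    · subst hk; simp
    · simp [Function.update_apply, hk]
  have h2 : ∑ k ∈ univ.erase j, c k * y k = dotp c y := by
    have h := Finset.add_sum_erase univ (fun k => c k * y k) (Finset.mem_univ j)
    simp only [hc, zero_mul, zero_add] at h
    simpa [dotp] using h
  calc dotp (Function.update c j ε) y
      = ∑ k, Function.update c j ε k * y k := rfl
    _ = ∑ k, Function.update (fun k => c k * y k) j (ε * y j) k := by rw [h1]
    _ = (ε * y j) + ∑ k ∈ univ \ {j}, c k * y k := by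
        rw [Finset.sum_update_of_mem (Finset.mem_univ j)]
    _ = dotp c y + ε * y j := by
        rw [Finset.sdiff_singleton_eq_erase, h2, add_comm]

lemma sum_sgn_eps (v : ZMod 2) :
    ∑ ε : ZMod 2, sgn (ε * v) = if v = 0 then 2 else 0 := by
  revert v; decide

/-- orthogonality -/
lemma orth {n : ℕ} (S : Finset (Fin n)) (y : Fin n → ZMod 2) :
    ∑ c ∈ CSet S, sgn (dotp c y)
      = if ∀ j ∈ S, y j = 0 then (2 : ℤ) ^ S.card else 0 := by
  classical
  induction S using Finset.induction_on with
  | empty =>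
      have h : CSet (∅ : Finset (Fin n)) = {0} := by
        ext c; simp [mem_CSet, funext_iff]
      simp [h, dotp_zero_left, sgn]
  | @insert j S hj ih =>
      have hsum : ∑ c ∈ CSet (insert j S), sgn (dotp c y)
          = ∑ p ∈ (univ : Finset (ZMod 2)) ×ˢ CSet S,
              sgn (dotp (Function.update p.2 j p.1) y) := by
        refine Finset.sum_nbij' (fun c' => (c' j, Function.update c' j 0))
          (fun p => Function.update p.2 j p.1) ?_ ?_ ?_ ?_ ?_
        · intro c' hc'
          rw [mem_CSet] at hc'
          simp only [Finset.mem_product, Finset.mem_univ, true_and, mem_CSet]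
          intro k hk
          by_cases hkj : k = j
          · subst hkj; simp
          · rw [Function.update_apply, if_neg hkj]
            exact hc' k (by simp [hkj, hk])
        · intro p hp
          simp only [Finset.mem_product, mem_CSet] at hp ⊢
          intro k hk
          have hkj : k ≠ j := by rintro rfl; exact hk (Finset.mem_insert_self _ S)
          rw [Function.update_apply, if_neg hkj]
          exact hp.2 k (fun hkS => hk (Finset.mem_insert_of_mem hkS))
        · intro c' _
          simp [Function.update_idem, Function.update_eq_self_iff]
        · intro p hp
          simp only [Finset.mem_product, Finset.mem_univ, true_and, mem_CSet] at hp
          have hpj : p.2 j = 0 := hp j hj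
          refine Prod.ext ?_ ?_
          · simp
          · show Function.update (Function.update p.2 j p.1) j 0 = p.2
            rw [Function.update_idem, Function.update_eq_self_iff, hpj]
        · intro c' hc'
          congr 1
          simp [Function.update_idem, Function.update_eq_self_iff]
      rw [hsum, Finset.sum_product_right]
      have hstep : ∀ c ∈ CSet S, ∑ ε : ZMod 2, sgn (dotp (Function.update c j ε) y)
          = sgn (dotp c y) * (if y j = 0 then 2 else 0) := by
        intro c hc
        rw [mem_CSet] at hc
        have hcj : c j = 0 := hc j hj
        calc ∑ ε : ZMod 2, sgn (dotp (Function.update c j ε) y)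
            = ∑ ε : ZMod 2, sgn (dotp c y) * sgn (ε * y j) := by
              refine Finset.sum_congr rfl fun ε _ => ?_
              rw [dotp_update c y j ε hcj, sgn_add]
          _ = sgn (dotp c y) * ∑ ε : ZMod 2, sgn (ε * y j) := by
              rw [Finset.mul_sum]
          _ = sgn (dotp c y) * (if y j = 0 then 2 else 0) := by rw [sum_sgn_eps]
      rw [Finset.sum_congr rfl hstep, ← Finset.sum_mul, ih,
        Finset.card_insert_of_notMem hj]
      by_cases hyj : y j = 0
      · by_cases hyS : ∀ k ∈ S, y k = 0
        · have : ∀ k ∈ insert j S, y k = 0 := by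
            intro k hk
            rcases Finset.mem_insert.mp hk with rfl | hk
            · exact hyj
            · exact hyS k hk
          rw [if_pos hyS, if_pos this, if_pos hyj]; ring
        · have : ¬ ∀ k ∈ insert j S, y k = 0 := fun h =>
            hyS fun k hk => h k (Finset.mem_insert_of_mem hk)
          rw [if_neg hyS, if_neg this]; ring
      · have : ¬ ∀ k ∈ insert j S, y k = 0 := fun h =>
          hyj (h j (Finset.mem_insert_self j S))
        rw [if_neg hyj, if_neg this]; ring

lemma zmod2_cases (u : ZMod 2) : u = 0 ∨ u = 1 := by revert u; decide

lemma zmod2_add_eq_zero (u v : ZMod 2) : u + v = 0 ↔ u = v := by revert u v; decide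

section Counts
variable {n : ℕ} {A : Type*} [DecidableEq A]

/-- Walsh coefficient of the indicator of the fiber. -/
def Wal (f : (Fin n → ZMod 2) → A) (α : A) (c : Fin n → ZMod 2) : ℤ :=
  ∑ x : Fin n → ZMod 2, (if f x = α then sgn (dotp c x) else 0)

def cntS (f : (Fin n → ZMod 2) → A) (α : A) (S : Finset (Fin n)) (a : Fin n → ZMod 2) : ℕ :=
  (univ.filter fun x => f x = α ∧ ∀ j ∈ S, x j = a j).card

def cntL (f : (Fin n → ZMod 2) → A) (α : A) (c : Fin n → ZMod 2) (b : ZMod 2) : ℕ :=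
  (univ.filter fun x => f x = α ∧ dotp c x = b).card

def Ncnt (f : (Fin n → ZMod 2) → A) (α : A) : ℕ := (univ.filter fun x => f x = α).card

variable (f : (Fin n → ZMod 2) → A) (α : A)

lemma W_eq (c : Fin n → ZMod 2) :
    Wal f α c = (cntL f α c 0 : ℤ) - (cntL f α c 1 : ℤ) := by
  unfold Wal cntL
  rw [Finset.card_filter, Finset.card_filter]
  push_cast
  rw [← Finset.sum_sub_distrib]
  refine Finset.sum_congr rfl fun x _ => ?_
  rcases zmod2_cases (dotp c x) with h | h <;> by_cases hf : f x = α <;>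
    simp [h, hf, sgn]

lemma N_eq (c : Fin n → ZMod 2) :
    (Ncnt f α : ℤ) = (cntL f α c 0 : ℤ) + (cntL f α c 1 : ℤ) := by
  unfold Ncnt cntL
  rw [Finset.card_filter, Finset.card_filter, Finset.card_filter]
  push_cast
  rw [← Finset.sum_add_distrib]
  refine Finset.sum_congr rfl fun x _ => ?_
  rcases zmod2_cases (dotp c x) with h | h <;> by_cases hf : f x = α <;>
    simp [h, hf]

lemma Wal_zero : Wal f α 0 = (Ncnt f α : ℤ) := by
  unfold Wal Ncnt
  rw [Finset.card_filter]
  push_cast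
  refine Finset.sum_congr rfl fun x _ => ?_
  simp [dotp_zero_left, sgn]

lemma lemB (S : Finset (Fin n)) (a : Fin n → ZMod 2) :
    (2 : ℤ) ^ S.card * (cntS f α S a : ℤ) = ∑ c ∈ CSet S, sgn (dotp c a) * Wal f α c := by
  have key : ∀ c : Fin n → ZMod 2, sgn (dotp c a) * Wal f α c
      = ∑ x : Fin n → ZMod 2, (if f x = α then sgn (dotp c (x + a)) else 0) := by
    intro c
    unfold Wal
    rw [Finset.mul_sum]
    refine Finset.sum_congr rfl fun x _ => ?_
    rw [mul_ite, mul_zero, dotp_add_right, sgn_add, mul_comm]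
  rw [Finset.sum_congr rfl fun c _ => key c, Finset.sum_comm]
  have inner : ∀ x : Fin n → ZMod 2,
      (∑ c ∈ CSet S, if f x = α then sgn (dotp c (x + a)) else 0)
      = if f x = α ∧ ∀ j ∈ S, x j = a j then (2 : ℤ) ^ S.card else 0 := by
    intro x
    by_cases hf : f x = α
    · simp only [hf, if_true, true_and]
      rw [orth S (x + a)]
      refine if_congr (forall₂_congr fun j _ => ?_) rfl rfl
      rw [Pi.add_apply]
      exact zmod2_add_eq_zero (x j) (a j)
    · simp [hf]
  rw [Finset.sum_congr rfl fun x _ => inner x]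
  unfold cntS
  rw [Finset.card_filter]
  push_cast
  rw [Finset.mul_sum]
  refine Finset.sum_congr rfl fun x _ => ?_
  split_ifs <;> ring

lemma lemC (c : Fin n → ZMod 2) (S : Finset (Fin n)) (hcS : ∀ j, c j ≠ 0 → j ∈ S) :
    Wal f α c = ∑ a ∈ CSet S, sgn (dotp c a) * (cntS f α S a : ℤ) := by
  have expand : ∀ a : Fin n → ZMod 2, sgn (dotp c a) * (cntS f α S a : ℤ)
      = ∑ x : Fin n → ZMod 2,
          (if f x = α ∧ ∀ j ∈ S, x j = a j then sgn (dotp c a) else 0) := by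
    intro a
    unfold cntS
    rw [Finset.card_filter]
    push_cast
    rw [Finset.mul_sum]
    refine Finset.sum_congr rfl fun x _ => ?_
    rw [mul_ite, mul_one, mul_zero]
  rw [Finset.sum_congr rfl fun a _ => expand a, Finset.sum_comm]
  unfold Wal
  refine Finset.sum_congr rfl fun x _ => Eq.symm ?_
  set a₀ : Fin n → ZMod 2 := fun j => if j ∈ S then x j else 0 with ha₀
  have ha₀mem : a₀ ∈ CSet S := by
    rw [mem_CSet]; intro j hj; simp [ha₀, hj]
  have hothers : ∀ b ∈ CSet S, b ≠ a₀ →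
      (if f x = α ∧ ∀ j ∈ S, x j = b j then sgn (dotp c b) else 0) = 0 := by
    intro b hb hne
    rw [mem_CSet] at hb
    rw [if_neg]
    rintro ⟨-, hx⟩
    apply hne
    funext j
    by_cases hj : j ∈ S
    · simp [ha₀, hj, (hx j hj).symm]
    · simp [ha₀, hj, hb j hj]
  rw [Finset.sum_eq_single_of_mem a₀ ha₀mem hothers]
  have h1 : ∀ j ∈ S, x j = a₀ j := fun j hj => by simp [ha₀, hj]
  have h2 : dotp c a₀ = dotp c x := by
    unfold dotp
    refine Finset.sum_congr rfl fun j _ => ?_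
    by_cases hj : j ∈ S
    · simp [ha₀, hj]
    · have hc : c j = 0 := by
        by_contra hcj; exact hj (hcS j hcj)
      simp [hc]
  by_cases hf : f x = α
  · rw [if_pos ⟨hf, h1⟩, h2, if_pos hf]
  · rw [if_neg (fun h => hf h.1), if_neg hf]

lemma natCard_eq (p : (Fin n → ZMod 2) → Prop) [DecidablePred p] :
    Nat.card {x : Fin n → ZMod 2 // p x} = (univ.filter p).card := by
  rw [Nat.card_eq_fintype_card, Fintype.card_subtype]

end Counts

/-- A generalized Boolean function is `t`-th order correlation-immune iff `f(x)` is
statistically independent of `c·x` for every nonzero `c` of Hamming weight at most `t`. -/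
theorem stmt11 (n m t : ℕ) (hn : 0 < n) (hm : 0 < m) (ht : 0 < t) (htn : t ≤ n)
    (f : (Fin n → ZMod 2) → ZMod (2 ^ m)) :
    CI t f ↔ ∀ c : Fin n → ZMod 2, c ≠ 0 → wt c ≤ t → ∀ b : ZMod 2, ∀ α : ZMod (2 ^ m),
      2 * Nat.card {x : Fin n → ZMod 2 // f x = α ∧ dotp c x = b}
        = Nat.card {x : Fin n → ZMod 2 // f x = α} := by
  constructor
  · intro hCI c hc0 hwt b α
    obtain ⟨S, hsub, hScard⟩ := Finset.exists_superset_card_eq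
      (le_trans (le_of_eq rfl) hwt : (univ.filter fun j => c j ≠ 0).card ≤ t)
      (by rw [Fintype.card_fin]; exact htn)
    have hcS : ∀ j, c j ≠ 0 → j ∈ S := fun j hj =>
      hsub (Finset.mem_filter.mpr ⟨Finset.mem_univ j, hj⟩)
    have hCIa : ∀ a : Fin n → ZMod 2, (2 : ℤ) ^ t * (cntS f α S a : ℤ) = (Ncnt f α : ℤ) := by
      intro a
      have h := hCI S hScard a α
      rw [natCard_eq, natCard_eq] at h
      unfold cntS Ncnt
      exact_mod_cast h
    have hfalse : ¬ ∀ j ∈ S, c j = 0 := by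
      obtain ⟨j, hj⟩ : ∃ j, c j ≠ 0 := by
        by_contra h; push_neg at h; exact hc0 (funext h)
      exact fun hall => hj (hall j (hcS j hj))
    have hW : Wal f α c = 0 := by
      have h2 : (2 : ℤ) ^ t * Wal f α c = 0 := by
        calc (2 : ℤ) ^ t * Wal f α c
            = ∑ a ∈ CSet S, (2 : ℤ) ^ t * (sgn (dotp c a) * (cntS f α S a : ℤ)) := by
              rw [lemC f α c S hcS, Finset.mul_sum]
          _ = ∑ a ∈ CSet S, sgn (dotp c a) * ((2 : ℤ) ^ t * (cntS f α S a : ℤ)) := by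
              exact Finset.sum_congr rfl fun a _ => by ring
          _ = ∑ a ∈ CSet S, sgn (dotp c a) * (Ncnt f α : ℤ) := by
              exact Finset.sum_congr rfl fun a _ => by rw [hCIa a]
          _ = (∑ a ∈ CSet S, sgn (dotp a c)) * (Ncnt f α : ℤ) := by
              rw [Finset.sum_mul]
              exact Finset.sum_congr rfl fun a _ => by rw [dotp_comm]
          _ = 0 := by rw [orth S c, if_neg hfalse, zero_mul]
      have hpos : (0 : ℤ) < 2 ^ t := by positivity
      exact (mul_eq_zero.mp h2).resolve_left (by exact_mod_cast hpos.ne')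
    have hWeq := W_eq f α c
    have hNeq := N_eq f α c
    rw [natCard_eq, natCard_eq]
    have key : ∀ b' : ZMod 2, 2 * (cntL f α c b' : ℤ) = (Ncnt f α : ℤ) := by
      intro b'
      rcases zmod2_cases b' with rfl | rfl <;> omega
    have := key b
    unfold cntL Ncnt at this
    exact_mod_cast this
  · intro h S hScard a α
    rw [natCard_eq, natCard_eq]
    have hW0 : ∀ c ∈ CSet S, c ≠ 0 → Wal f α c = 0 := by
      intro c hc hc0
      rw [mem_CSet] at hc
      have hwt : wt c ≤ t := by
        unfold wt
        calc (univ.filter fun j => c j ≠ 0).card ≤ S.card := by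
              refine Finset.card_le_card fun j hj => ?_
              rw [Finset.mem_filter] at hj
              by_contra hjS
              exact hj.2 (hc j hjS)
          _ = t := hScard
      have h0 := h c hc0 hwt 0 α
      have h1 := h c hc0 hwt 1 α
      rw [natCard_eq, natCard_eq] at h0 h1
      have e0 : 2 * (cntL f α c 0 : ℤ) = (Ncnt f α : ℤ) := by
        unfold cntL Ncnt; exact_mod_cast h0
      have e1 : 2 * (cntL f α c 1 : ℤ) = (Ncnt f α : ℤ) := by
        unfold cntL Ncnt; exact_mod_cast h1
      have hWeq := W_eq f α c
      have hNeq := N_eq f α c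
      omega
    have hB := lemB f α S a
    have h0mem : (0 : Fin n → ZMod 2) ∈ CSet S := by
      rw [mem_CSet]; intro j _; rfl
    rw [Finset.sum_eq_single_of_mem 0 h0mem
      (fun c hc hne => by rw [hW0 c hc hne, mul_zero])] at hB
    have hs0 : sgn (dotp 0 a) = 1 := by rw [dotp_zero_left]; rfl
    rw [hs0, one_mul, Wal_zero, hScard] at hB
    unfold cntS Ncnt at hB
    exact_mod_cast hB
end
end
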